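/- Let μ be the Lie bracket on ℝ⁴ = ℝ³ × ℝ given by the cross product on the first factor and zero on the second factor, i.e., μ((u,s),(v,t)) = (u × v, 0) — the Lie algebra su(2) ⊕ ℝ. Then for every nondegenerate symmetric bilinear form B on ℝ⁴, the bracket μ is NOT in the null cone of the O(B)-action; that is, 0 does not lie in the closure of the orbit O(B)·μ. (This is the only 4-dimensional real Lie algebra not in the null cone of the O(1,3)- or O(2,2)-action.) -/

import Mathlib

/-!
The Killing form `κ_μ(x, y) = tr(μ x ∘ μ y)` satisfies `κ_{A·μ}(x, y) = κ_μ(A x, A y)`, so for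
`A ∈ O(B)` the number `tr((B⁻¹κ_μ)²)` (Gram matrices in a fixed basis) is constant along the
orbit `O(B)·μ`. It is a polynomial in finitely many structure constants, hence continuous, and it
vanishes at `μ = 0`. For `su(2) ⊕ ℝ` the Killing form is `-2` times the dot product on `ℝ³`, and
the invariant is `4 ∑_{i,j<3} (B⁻¹)ᵢⱼ²`; if it vanished, `ℝ³` would be totally isotropic for the
nondegenerate form `B⁻¹` on `ℝ⁴`, which is impossible since `3 > 4/2`.
-/

/-- The isometry group `O(B)` of a bilinear form `B`. -/
def IsometryGrp {V : Type*} [AddCommGroup V] [Module ℝ V]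
    (B : LinearMap.BilinForm ℝ V) : Set (V ≃ₗ[ℝ] V) :=
  {A | ∀ x y, B (A x) (A y) = B x y}

/-- `μ` is in the null cone of the `O(B)`-action: `0` lies in the closure of the orbit
`O(B)·μ`, `(A·μ)(x,y) = A⁻¹(μ(Ax,Ay))`, in the topology of pointwise convergence. -/
def InNullCone {V : Type*} [AddCommGroup V] [Module ℝ V] [TopologicalSpace V]
    (B : LinearMap.BilinForm ℝ V) (μ : V → V → V) : Prop :=
  (0 : V → V → V) ∈
    closure {f : V → V → V | ∃ A ∈ IsometryGrp B, f = fun x y => A.symm (μ (A x) (A y))}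

/-- The bracket of `su(2) ⊕ ℝ` on `ℝ⁴ = ℝ³ × ℝ`: the cross product on the first factor and
zero on the second factor. -/
def su2SumRBracket : ((Fin 3 → ℝ) × ℝ) → ((Fin 3 → ℝ) × ℝ) → ((Fin 3 → ℝ) × ℝ) :=
  fun a b => (crossProduct a.1 b.1, 0)

open Matrix Module

namespace Matrix

variable {m n K : Type*} [Fintype m] [Fintype n] [DecidableEq m] [DecidableEq n]

theorem trace_sq_mul_diagonal [CommRing K] {G : Matrix m m K} (hG : G.IsSymm) (d : m → K) :
    ((G * diagonal d) ^ 2).trace = ∑ i, ∑ j, d i * d j * G i j ^ 2 := by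
  simp only [sq, trace, diag, mul_apply, diagonal_apply, mul_ite, mul_zero, Finset.sum_ite_eq',
    Finset.mem_univ, if_true]
  refine Finset.sum_congr rfl fun i _ => Finset.sum_congr rfl fun j _ => ?_
  rw [hG.apply i j]
  ring

theorem trace_sq_inv_mul_transpose_mul_mul [CommRing K] {Q M : Matrix m m K} (hQ : IsUnit Q.det)
    (hM : Mᵀ * Q * M = Q) (S : Matrix m m K) :
    ((Q⁻¹ * (Mᵀ * S * M)) ^ 2).trace = ((Q⁻¹ * S) ^ 2).trace := by
  have hleft : Q⁻¹ * Mᵀ * (Q * M) = 1 := by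
    rw [Matrix.mul_assoc, ← Matrix.mul_assoc Mᵀ, hM, nonsing_inv_mul _ hQ]
  have hconj : Q⁻¹ * (Mᵀ * S * M) = M⁻¹ * (Q⁻¹ * S) * M := by
    rw [← Matrix.mul_assoc M⁻¹, ← Matrix.mul_inv_rev, inv_eq_left_inv hleft]
    simp only [Matrix.mul_assoc]
  obtain ⟨u, rfl⟩ : IsUnit M := (isUnit_iff_isUnit_det M).mpr <| isUnit_of_mul_isUnit_right <|
    det_mul Q M ▸ isUnit_det_of_left_inverse hleft
  rw [hconj, ← coe_units_inv, Units.conj_pow', trace_units_conj']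

theorem det_eq_zero_of_toBlocks₁₁_eq_zero [Field K] {G : Matrix (m ⊕ n) (m ⊕ n) K}
    (hG : G.toBlocks₁₁ = 0) (hcard : Fintype.card n < Fintype.card m) : G.det = 0 := by
  obtain ⟨v, hv, hv0⟩ : ∃ v ∈ LinearMap.ker G.toBlocks₁₂.vecMulLinear, v ≠ 0 :=
    Submodule.exists_mem_ne_zero_of_ne_bot <|
      LinearMap.ker_ne_bot_of_finrank_lt (by simpa using hcard)
  refine exists_vecMul_eq_zero_iff.mp
    ⟨Sum.elim v 0, fun h => hv0 (funext fun i => congrFun h (.inl i)), ?_⟩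
  rw [← fromBlocks_toBlocks G, vecMul_fromBlocks, hG]
  ext (i | i) <;> simp_all

theorem trace_sq_mul_diagonal_sumElim_ne_zero [Field K] [LinearOrder K] [IsStrictOrderedRing K]
    {G : Matrix (m ⊕ n) (m ⊕ n) K} (hG : G.IsSymm) (hdet : G.det ≠ 0)
    (hcard : Fintype.card n < Fintype.card m) {c : K} (hc : c ≠ 0) :
    ((G * diagonal (Sum.elim (fun _ => c) 0)) ^ 2).trace ≠ 0 := by
  intro h
  simp only [trace_sq_mul_diagonal hG, Fintype.sum_sum_type, Sum.elim_inl, Sum.elim_inr,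
    Pi.zero_apply, zero_mul, mul_zero, Finset.sum_const_zero, add_zero] at h
  refine hdet (det_eq_zero_of_toBlocks₁₁_eq_zero ?_ hcard)
  ext i j
  have hterm : ∀ i j, 0 ≤ c * c * G (.inl i) (.inl j) ^ 2 :=
    fun i j => mul_nonneg (mul_self_nonneg c) (sq_nonneg _)
  have hrow := congrFun ((Fintype.sum_eq_zero_iff_of_nonneg fun i =>
    Finset.sum_nonneg fun j _ => hterm i j).mp h) i
  have := congrFun ((Fintype.sum_eq_zero_iff_of_nonneg (hterm i)).mp hrow) j
  simpa [toBlocks₁₁, hc] using this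

end Matrix

noncomputable section

section KillingMatrix

variable {ι R M : Type*} [Fintype ι] [CommRing R] [AddCommGroup M] [Module R M]

/-- The Gram matrix of the Killing form written through structure constants: it is defined for
every `f`, not only bilinear ones, which makes it continuous on the ambient space of the orbit. -/
def killingMatrix (b : Basis ι R M) (f : M → M → M) : Matrix ι ι R :=
  Matrix.of fun a c => ∑ j, ∑ k, b.repr (f (b a) (b k)) j * b.repr (f (b c) (b j)) k

theorem continuous_killingMatrix {𝕜 V : Type*} [NontriviallyNormedField 𝕜] [CompleteSpace 𝕜]
    [AddCommGroup V] [Module 𝕜 V] [TopologicalSpace V] [IsTopologicalAddGroup V]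
    [ContinuousSMul 𝕜 V] [T2Space V] [FiniteDimensional 𝕜 V] (b : Basis ι 𝕜 V) :
    Continuous (killingMatrix b) := by
  have hcoord (x y : V) (k : ι) : Continuous fun f : V → V → V => b.repr (f x y) k :=
    (b.coord k).continuous_of_finiteDimensional.comp
      ((continuous_apply y).comp (continuous_apply x))
  refine continuous_matrix fun a c => ?_
  simp only [killingMatrix, of_apply]
  fun_prop

theorem killingMatrix_zero (b : Basis ι R M) : killingMatrix b 0 = 0 := by
  ext a c
  simp [killingMatrix]

def traceForm (μ : M →ₗ[R] M →ₗ[R] M) : LinearMap.BilinForm R M :=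
  ((LinearMap.mul R (Module.End R M)).compl₁₂ μ μ).compr₂ (LinearMap.trace R M)

theorem traceForm_apply (μ : M →ₗ[R] M →ₗ[R] M) (x y : M) :
    traceForm μ x y = LinearMap.trace R M (μ x ∘ₗ μ y) := rfl

theorem traceForm_conj (μ : M →ₗ[R] M →ₗ[R] M) (A : M ≃ₗ[R] M) :
    traceForm ((μ.compl₁₂ (A : M →ₗ[R] M) A).compr₂ (A.symm : M →ₗ[R] M)) =
      (traceForm μ).comp A A := by
  ext x y
  calc traceForm _ x y = LinearMap.trace R M (A.symm.conj (μ (A x) ∘ₗ μ (A y))) := by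
        rw [LinearEquiv.conj_comp]; rfl
    _ = _ := LinearMap.trace_conj' _ _

variable [DecidableEq ι]

theorem killingMatrix_eq_toMatrix (b : Basis ι R M) (μ : M →ₗ[R] M →ₗ[R] M) :
    killingMatrix b (fun x y => μ x y) = (traceForm μ).toMatrix b := by
  ext a c
  rw [LinearMap.BilinForm.toMatrix_apply, traceForm_apply, LinearMap.trace_eq_matrix_trace R b,
    LinearMap.toMatrix_comp b b b]
  simp only [killingMatrix, of_apply, trace, diag, mul_apply, LinearMap.toMatrix_apply]

theorem killingMatrix_conj (b : Basis ι R M) (μ : M →ₗ[R] M →ₗ[R] M) (A : M ≃ₗ[R] M) :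
    killingMatrix b (fun x y => A.symm (μ (A x) (A y))) =
      (LinearMap.toMatrix b b A)ᵀ * killingMatrix b (fun x y => μ x y) *
        LinearMap.toMatrix b b A := by
  rw [killingMatrix_eq_toMatrix, ← LinearMap.BilinForm.toMatrix_comp b b, ← traceForm_conj,
    ← killingMatrix_eq_toMatrix]
  rfl

end KillingMatrix

section NullCone

variable {ι V : Type*} [Fintype ι] [DecidableEq ι] [AddCommGroup V] [Module ℝ V]

theorem not_inNullCone_of_continuous_invariant [TopologicalSpace V]
    {B : LinearMap.BilinForm ℝ V} {μ : V → V → V} {X : Type*} [TopologicalSpace X] [T1Space X]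
    {I : (V → V → V) → X} (hI : Continuous I)
    (hinv : ∀ A ∈ IsometryGrp B, I (fun x y => A.symm (μ (A x) (A y))) = I μ)
    (h0 : I 0 ≠ I μ) : ¬ InNullCone B μ := by
  intro h
  have : I 0 ∈ closure {I μ} := map_mem_closure hI h fun _ ⟨A, hA, hf⟩ => hf ▸ hinv A hA
  exact h0 (by simpa using this)

theorem toMatrix_transpose_mul_mul_of_mem_isometryGrp (b : Basis ι ℝ V)
    {B : LinearMap.BilinForm ℝ V} {A : V ≃ₗ[ℝ] V} (hA : A ∈ IsometryGrp B) :
    (LinearMap.toMatrix b b A)ᵀ * B.toMatrix b * LinearMap.toMatrix b b A = B.toMatrix b := by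
  rw [← LinearMap.BilinForm.toMatrix_comp b b]
  congr 1
  ext x y
  exact hA x y

def killingNormSq (B : LinearMap.BilinForm ℝ V) (b : Basis ι ℝ V) (f : V → V → V) : ℝ :=
  (((B.toMatrix b)⁻¹ * killingMatrix b f) ^ 2).trace

theorem not_inNullCone_of_killingNormSq_ne_zero [TopologicalSpace V] [IsTopologicalAddGroup V]
    [ContinuousSMul ℝ V] [T2Space V] [FiniteDimensional ℝ V] (b : Basis ι ℝ V)
    {B : LinearMap.BilinForm ℝ V} (hB : B.Nondegenerate) (μ : V →ₗ[ℝ] V →ₗ[ℝ] V)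
    (h : killingNormSq B b (fun x y => μ x y) ≠ 0) : ¬ InNullCone B (fun x y => μ x y) := by
  have hQ : IsUnit (B.toMatrix b).det := ((B.nondegenerate_iff_det_ne_zero b).mp hB).isUnit
  refine not_inNullCone_of_continuous_invariant (I := killingNormSq B b) ?_ (fun A hA => ?_) ?_
  · exact ((continuous_const.matrix_mul (continuous_killingMatrix b)).pow 2).matrix_trace
  · rw [killingNormSq, killingMatrix_conj,
      trace_sq_inv_mul_transpose_mul_mul hQ (toMatrix_transpose_mul_mul_of_mem_isometryGrp b hA)]
    rfl
  · simpa [killingNormSq, killingMatrix_zero, eq_comm] using h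

end NullCone

def su2SumRBilin : ((Fin 3 → ℝ) × ℝ) →ₗ[ℝ] ((Fin 3 → ℝ) × ℝ) →ₗ[ℝ] ((Fin 3 → ℝ) × ℝ) :=
  (crossProduct.compl₁₂ (LinearMap.fst ℝ _ ℝ) (LinearMap.fst ℝ _ ℝ)).compr₂ (LinearMap.inl ℝ _ ℝ)

theorem su2SumRBilin_eq : (fun x y => su2SumRBilin x y) = su2SumRBracket := by
  funext x y
  rfl

def su2SumRBasis : Basis (Fin 3 ⊕ Unit) ℝ ((Fin 3 → ℝ) × ℝ) :=
  (Pi.basisFun ℝ (Fin 3)).prod (Basis.singleton Unit ℝ)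

theorem killingMatrix_su2SumRBracket :
    killingMatrix su2SumRBasis su2SumRBracket = diagonal (Sum.elim (fun _ => -2) 0) := by
  ext (a | a) (c | c) <;> fin_cases a <;> fin_cases c <;>
    simp [killingMatrix, su2SumRBasis, su2SumRBracket, Fintype.sum_sum_type, Fin.sum_univ_three,
      cross_apply] <;> norm_num

end

theorem su2_sum_R_not_in_null_cone
    (B : LinearMap.BilinForm ℝ ((Fin 3 → ℝ) × ℝ))
    (hBnd : ∀ x, (∀ y, B x y = 0) → x = 0)
    (hBsymm : ∀ x y, B x y = B y x) :
    ¬ InNullCone B su2SumRBracket := by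
  have hQ : (B.toMatrix su2SumRBasis).IsSymm :=
    (B.isSymm_toMatrix_iff_isSymm su2SumRBasis).mpr ⟨hBsymm⟩
  have hB : B.Nondegenerate := .ofSeparatingLeft hBnd
  have hdet : (B.toMatrix su2SumRBasis).det ≠ 0 := (B.nondegenerate_iff_det_ne_zero _).mp hB
  rw [← su2SumRBilin_eq]
  refine not_inNullCone_of_killingNormSq_ne_zero su2SumRBasis hB su2SumRBilin ?_
  rw [killingNormSq, su2SumRBilin_eq, killingMatrix_su2SumRBracket]
  exact trace_sq_mul_diagonal_sumElim_ne_zero hQ.inv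
    (isUnit_nonsing_inv_det_iff.mpr hdet.isUnit).ne_zero (by simp) (by norm_num)
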